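/- There is a universal constant K > 0 such that for every n ≥ 1, every 0 < ε, δ < 1, every η_est > 0, and every m ≥ K·log(n/(ε·δ))/(ε²·η_est), there exists an estimator f mapping m-tuples of samples in {1,2,3}^n × {0,1}^n to functions {0,1,2,3}^n → ℝ with the following property: for every probability distribution p on {0,1,2,3}^n whose error rate η := 1 − p(0^n) satisfies η_est/5 ≤ η ≤ 5·η_est, if the m samples are i.i.d. pairs (A, A⋆C) with A uniform on {1,2,3}^n and C ~ p independent, then with probability at least 1 − δ the output p̂ = f(samples) satisfies ‖p̂ − p‖_∞ ≤ ε·η. -/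

import Mathlib

set_option maxHeartbeats 1000000


open scoped BigOperators

noncomputable section

/-- Identify `a ∈ {0,1,2,3}` with its base-2 representation `(a₁, a₂) ∈ 𝔽₂²`. -/
def bits (a : Fin 4) : ZMod 2 × ZMod 2 :=
  (((a.val / 2 : ℕ) : ZMod 2), ((a.val % 2 : ℕ) : ZMod 2))

/-- Symplectic product `a ⋆ b = a₁b₂ + a₂b₁ (mod 2)`. -/
def sstar (a b : Fin 4) : ZMod 2 :=
  (bits a).1 * (bits b).2 + (bits a).2 * (bits b).1

/-- Coordinatewise symplectic product `A ⋆ C ∈ {0,1}ⁿ`. -/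
def starN {n : ℕ} (A C : Fin n → Fin 4) : Fin n → ZMod 2 :=
  fun j => sstar (A j) (C j)

/-- View a string in `{1,2,3}ⁿ` as a string in `{0,1,2,3}ⁿ`. -/
def lift3 {n : ℕ} (A : Fin n → Fin 3) : Fin n → Fin 4 := fun j => (A j).succ

/-- The sample distribution `D_p` on `{1,2,3}ⁿ × {0,1}ⁿ`: the law of
`(A, A⋆C)` with `A` uniform on `{1,2,3}ⁿ` and independently `C ~ p`. -/
def sampleDist {n : ℕ} (p : (Fin n → Fin 4) → ℝ)
    (s : (Fin n → Fin 3) × (Fin n → ZMod 2)) : ℝ :=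
  ((3 : ℝ) ^ n)⁻¹ * ∑ C : Fin n → Fin 4,
    (if starN (lift3 s.1) C = s.2 then p C else 0)

namespace PopRec

def g (b : Fin 4) (a : Fin 3) (y : ZMod 2) : ℝ :=
  if b = 0 then (if y = 0 then 1 else -(1/2))
  else (if y = (if a.succ = b then 0 else 1) then 1 else -(1/2))
def gh (b : Fin 4) (a : Fin 3) (y : ZMod 2) : ℝ :=
  g b a y - (1/3) * (g 1 a y + g 2 a y + g 3 a y)
def e3 (b c : Fin 4) : ℝ := if c = 0 then 0 else if c = b then 1/3 else -(1/6)

lemma L1 (b c : Fin 4) :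
    ∑ a : Fin 3, g b a (sstar a.succ c) = 3 * (if c = b then 1 else 0) := by
  fin_cases b <;> fin_cases c <;>
    simp (config := { decide := true }) [Fin.sum_univ_three, g, sstar, bits, Fin.succ] <;>
    norm_num

lemma L2 (b c : Fin 4) (hb : b ≠ 0) :
    ∑ a : Fin 3, gh b a (sstar a.succ c)
      = 3 * ((if c = b then 1 else 0) - (1/3) * (if c = 0 then 0 else 1)) := by
  fin_cases b <;> fin_cases c <;> first
  | exact absurd rfl hb
  | (simp (config := { decide := true }) [Fin.sum_univ_three, gh, g, sstar, bits, Fin.succ] <;>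
     norm_num)

lemma L3 (b c : Fin 4) (hb : b ≠ 0) :
    ∑ a : Fin 3, (if sstar a.succ c = 0 then g b a 0 else 0) = 3 * e3 b c := by
  fin_cases b <;> fin_cases c <;> first
  | exact absurd rfl hb
  | (simp (config := { decide := true }) [Fin.sum_univ_three, e3, g, sstar, bits, Fin.succ] <;>
     norm_num)

lemma L4 (b c : Fin 4) (hb : b ≠ 0) :
    ∑ a : Fin 3, (if sstar a.succ c = 0 then gh b a 0 else 0) = 3 * e3 b c := by
  fin_cases b <;> fin_cases c <;> first
  | exact absurd rfl hb
  | (simp (config := { decide := true }) [Fin.sum_univ_three, e3, gh, g, sstar, bits, Fin.succ] <;>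
     norm_num)

lemma g_abs (b : Fin 4) (a : Fin 3) (y : ZMod 2) : |g b a y| ≤ 1 := by
  unfold g ; split_ifs <;> rw [abs_le] <;> norm_num

lemma gh_abs (b : Fin 4) (a : Fin 3) (y : ZMod 2) : |gh b a y| ≤ 2 := by
  unfold gh
  calc |g b a y - 1/3 * (g 1 a y + g 2 a y + g 3 a y)|
      ≤ |g b a y| + |1/3 * (g 1 a y + g 2 a y + g 3 a y)| := abs_sub _ _
    _ ≤ 1 + 1/3 * (|g 1 a y| + |g 2 a y| + |g 3 a y|) := by
        gcongr
        · exact g_abs _ _ _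
        · calc |1/3 * (g 1 a y + g 2 a y + g 3 a y)|
              = 1/3 * |g 1 a y + g 2 a y + g 3 a y| := by rw [abs_mul]; norm_num
            _ ≤ 1/3 * (|g 1 a y| + |g 2 a y| + |g 3 a y|) := by
                gcongr; exact (abs_add_three _ _ _)
    _ ≤ 1 + 1/3 * (1 + 1 + 1) := by
        gcongr <;> exact g_abs _ _ _
    _ = 2 := by norm_num

lemma sstar_zero (a : Fin 4) : sstar a 0 = 0 := by simp [sstar, bits]

variable {n : ℕ}

abbrev Sam (n : ℕ) := (Fin n → Fin 3) × (Fin n → ZMod 2)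

def Jset (n ℓ : ℕ) : Finset (Fin n) := Finset.univ.filter (fun j => (j : ℕ) < ℓ)
def Sset (ℓ : ℕ) (x : Fin n → Fin 4) : Finset (Fin n) :=
  Finset.univ.filter (fun j => (j : ℕ) < ℓ ∧ x j ≠ 0)
def cw (w : ℕ) : ℝ := ((2:ℝ)^w - 1)⁻¹

def base1 (ℓ : ℕ) (x : Fin n → Fin 4) (s : Sam n) : ℝ :=
  ∏ j ∈ Jset n ℓ, g (x j) (s.1 j) (s.2 j)
def base2 (ℓ : ℕ) (x : Fin n → Fin 4) (s : Sam n) : ℝ :=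
  ∏ j ∈ Jset n ℓ, (if x j = 0 then g 0 (s.1 j) (s.2 j) else gh (x j) (s.1 j) (s.2 j))
def indic (ℓ : ℕ) (x : Fin n → Fin 4) (s : Sam n) : ℝ :=
  if ∀ j ∈ Sset ℓ x, s.2 j = 0 then 0 else 1
def Fstat (ℓ : ℕ) (x : Fin n → Fin 4) (s : Sam n) : ℝ :=
  if Sset ℓ x = ∅ then base1 ℓ x s
  else (base1 ℓ x s + cw (Sset ℓ x).card * base2 ℓ x s) * indic ℓ x s

lemma Sset_subset_Jset (ℓ : ℕ) (x : Fin n → Fin 4) : Sset ℓ x ⊆ Jset n ℓ := by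
  intro j hj
  simp only [Sset, Jset, Finset.mem_filter, Finset.mem_univ, true_and] at *
  exact hj.1

lemma Sset_eq_filter (ℓ : ℕ) (x : Fin n → Fin 4) :
    Sset ℓ x = (Jset n ℓ).filter (fun j => x j ≠ 0) := by
  simp [Sset, Jset, Finset.filter_filter]

/-- product of indicators = indicator of conjunction -/
lemma prod_ind (J : Finset (Fin n)) (P : Fin n → Prop) [DecidablePred P] :
    (∏ j ∈ J, (if P j then (1:ℝ) else 0)) = if ∀ j ∈ J, P j then 1 else 0 := by
  by_cases h : ∀ j ∈ J, P j
  · rw [if_pos h]; exact Finset.prod_eq_one (fun j hj => if_pos (h j hj))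
  · rw [if_neg h]
    push_neg at h
    obtain ⟨j, hj, hP⟩ := h
    exact Finset.prod_eq_zero hj (if_neg hP)

lemma indic_eq (ℓ : ℕ) (x : Fin n → Fin 4) (s : Sam n) :
    indic ℓ x s = 1 - ∏ j ∈ Sset ℓ x, (if s.2 j = 0 then (1:ℝ) else 0) := by
  rw [prod_ind, indic]
  split_ifs <;> ring

/-- sum over uniform A of a product over a subset of coordinates -/
lemma sum_pi3_prod (J : Finset (Fin n)) (h : Fin n → Fin 3 → ℝ) :
    ∑ A : Fin n → Fin 3, ∏ j ∈ J, h j (A j)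
      = (3:ℝ)^(n - J.card) * ∏ j ∈ J, ∑ a : Fin 3, h j a := by
  classical
  have e1 : ∀ A : Fin n → Fin 3, (∏ j ∈ J, h j (A j))
      = ∏ j : Fin n, (if j ∈ J then h j (A j) else 1) := by
    intro A
    rw [Finset.prod_ite_mem Finset.univ J (fun j => h j (A j)), Finset.univ_inter]
  simp_rw [e1]
  rw [← Fintype.piFinset_univ, ← Finset.prod_univ_sum (fun _ => Finset.univ)
      (fun j a => if j ∈ J then h j a else 1)]
  have e2 : ∀ j : Fin n, (∑ a : Fin 3, if j ∈ J then h j a else 1)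
      = if j ∈ J then ∑ a : Fin 3, h j a else 3 := by
    intro j; split_ifs <;> simp
  rw [Finset.prod_congr rfl (fun j _ => e2 j)]
  rw [← Finset.prod_filter_mul_prod_filter_not Finset.univ (· ∈ J)]
  have e3 : Finset.univ.filter (· ∈ J) = J := by
    ext j; simp
  have e4 : (Finset.univ.filter (fun j => ¬ j ∈ J)) = Jᶜ := by
    ext j; simp
  rw [e3, e4]
  have e5 : (∏ j ∈ Jᶜ, (3:ℝ)) = 3^(n - J.card) := by
    rw [Finset.prod_const, Finset.card_compl]
    simp
  rw [Finset.prod_congr (rfl : J = J) (fun j hj => if_pos hj),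
    Finset.prod_congr (rfl : Jᶜ = Jᶜ) (fun j hj => if_neg (Finset.mem_compl.mp hj)), e5]
  ring

end PopRec

namespace PopRec
variable {n : ℕ}

def dta (c b : Fin 4) : ℝ := if c = b then 1 else 0

lemma factor3 (J : Finset (Fin n)) (v : Fin n → ℝ) :
    (∏ j ∈ J, (3 * v j)) = 3^(J.card) * ∏ j ∈ J, v j := by
  rw [Finset.prod_mul_distrib, Finset.prod_const]

lemma pow3J (ℓ : ℕ) : (3:ℝ)^(n - (Jset n ℓ).card) * 3^((Jset n ℓ).card) = 3^n := by
  rw [← pow_add, Nat.sub_add_cancel]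
  simpa using Finset.card_le_univ (Jset n ℓ)

lemma e3_half (b c : Fin 4) (hb : b ≠ 0) (hc : c ≠ 0) :
    e3 b c = (1/2) * (dta c b - (1/3) * 1) := by
  unfold e3 dta
  rw [if_neg hc]
  by_cases h : c = b
  · rw [if_pos h, if_pos h]; norm_num
  · rw [if_neg h, if_neg h]; norm_num

lemma cw_key (w : ℕ) (hw : w ≠ 0) : (1 + cw w) * (1/2:ℝ)^w = cw w := by
  have h2w : (1:ℝ) < 2^w := by
    apply one_lt_pow₀ (by norm_num) hw
  have hne : (2:ℝ)^w - 1 ≠ 0 := by linarith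
  have hne2 : (2:ℝ)^w ≠ 0 := by positivity
  unfold cw
  rw [one_div, inv_pow]
  field_simp
  ring

lemma U (ℓ : ℕ) (x : Fin n → Fin 4) (C : Fin n → Fin 4) :
    ∑ A : Fin n → Fin 3, Fstat ℓ x (A, starN (lift3 A) C)
      = (3:ℝ)^n * (if ∀ j ∈ Jset n ℓ, C j = x j then 1 else 0) := by
  classical
  set J := Jset n ℓ with hJ
  -- the four per-coordinate kernels
  set h1 : Fin n → Fin 3 → ℝ := fun j a => g (x j) a (sstar a.succ (C j)) with hh1
  set h2 : Fin n → Fin 3 → ℝ := fun j a =>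
    if x j = 0 then g 0 a (sstar a.succ (C j)) else gh (x j) a (sstar a.succ (C j)) with hh2
  set h3 : Fin n → Fin 3 → ℝ := fun j a =>
    if x j = 0 then g 0 a (sstar a.succ (C j))
    else (if sstar a.succ (C j) = 0 then g (x j) a 0 else 0) with hh3
  set h4 : Fin n → Fin 3 → ℝ := fun j a =>
    if x j = 0 then g 0 a (sstar a.succ (C j))
    else (if sstar a.succ (C j) = 0 then gh (x j) a 0 else 0) with hh4
  -- their coordinate expectations
  have s1 : ∀ j, (∑ a : Fin 3, h1 j a) = 3 * dta (C j) (x j) := fun j => L1 (x j) (C j)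
  have s2 : ∀ j, (∑ a : Fin 3, h2 j a)
      = 3 * (if x j = 0 then dta (C j) (x j)
             else dta (C j) (x j) - (1/3) * (if C j = 0 then 0 else 1)) := by
    intro j
    by_cases h : x j = 0
    · simp only [hh2, h, ↓reduceIte]
      unfold dta; exact L1 0 (C j)
    · simp only [hh2, if_neg h]
      rw [L2 (x j) (C j) h]; unfold dta; ring
  have s3 : ∀ j, (∑ a : Fin 3, h3 j a)
      = 3 * (if x j = 0 then dta (C j) (x j) else e3 (x j) (C j)) := by
    intro j
    by_cases h : x j = 0
    · simp only [hh3, h, ↓reduceIte]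
      unfold dta; exact L1 0 (C j)
    · simp only [hh3, if_neg h]
      rw [L3 (x j) (C j) h]
  have s4 : ∀ j, (∑ a : Fin 3, h4 j a)
      = 3 * (if x j = 0 then dta (C j) (x j) else e3 (x j) (C j)) := by
    intro j
    by_cases h : x j = 0
    · simp only [hh4, h, ↓reduceIte]
      unfold dta; exact L1 0 (C j)
    · simp only [hh4, if_neg h]
      rw [L4 (x j) (C j) h]
  set E2 : Fin n → ℝ := fun j => if x j = 0 then dta (C j) (x j)
      else dta (C j) (x j) - (1/3) * (if C j = 0 then 0 else 1) with hE2
  set E3 : Fin n → ℝ := fun j => if x j = 0 then dta (C j) (x j) else e3 (x j) (C j) with hE3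
  have key : (∏ j ∈ J, dta (C j) (x j)) = (if ∀ j ∈ J, C j = x j then 1 else 0) := by
    unfold dta; exact prod_ind J (fun j => C j = x j)
  have T1 : ∑ A : Fin n → Fin 3, ∏ j ∈ J, h1 j (A j)
      = (3:ℝ)^n * (if ∀ j ∈ J, C j = x j then 1 else 0) := by
    rw [sum_pi3_prod J h1, Finset.prod_congr rfl (fun j _ => s1 j), factor3, ← key, hJ,
      ← mul_assoc, pow3J]
  by_cases hS : Sset ℓ x = ∅
  · have hpt : ∀ A : Fin n → Fin 3, Fstat ℓ x (A, starN (lift3 A) C) = ∏ j ∈ J, h1 j (A j) := by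
      intro A; rw [Fstat, if_pos hS]; rfl
    rw [Finset.sum_congr rfl (fun A _ => hpt A)]
    exact T1
  · have w1 : (Sset ℓ x).card ≠ 0 := by
      simpa [Finset.card_eq_zero] using hS
    have dec : ∀ A : Fin n → Fin 3, Fstat ℓ x (A, starN (lift3 A) C)
        = (∏ j ∈ J, h1 j (A j)) + cw (Sset ℓ x).card * (∏ j ∈ J, h2 j (A j))
          - (∏ j ∈ J, h3 j (A j)) - cw (Sset ℓ x).card * (∏ j ∈ J, h4 j (A j)) := by
      intro A
      have hb1 : base1 ℓ x (A, starN (lift3 A) C) = ∏ j ∈ J, h1 j (A j) := rfl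
      have hb2 : base2 ℓ x (A, starN (lift3 A) C) = ∏ j ∈ J, h2 j (A j) := rfl
      have hzind : (∏ j ∈ Sset ℓ x, (if (starN (lift3 A) C) j = 0 then (1:ℝ) else 0))
          = ∏ j ∈ J, (if x j ≠ 0 then (if sstar (A j).succ (C j) = 0 then (1:ℝ) else 0) else 1) := by
        rw [Sset_eq_filter, Finset.prod_filter]; rfl
      have hz3 : (∏ j ∈ J, h1 j (A j))
            * (∏ j ∈ J, (if x j ≠ 0 then (if sstar (A j).succ (C j) = 0 then (1:ℝ) else 0) else 1))
          = ∏ j ∈ J, h3 j (A j) := by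
        rw [← Finset.prod_mul_distrib]
        apply Finset.prod_congr rfl
        intro j _
        by_cases h : x j = 0
        · simp [hh1, hh3, h]
        · simp only [hh1, hh3, h, ↓reduceIte, not_false_eq_true, ne_eq]
          by_cases hy : sstar (A j).succ (C j) = 0
          · rw [if_pos hy, if_pos hy, hy, mul_one]
          · rw [if_neg hy, if_neg hy, mul_zero]
      have hz4 : (∏ j ∈ J, h2 j (A j))
            * (∏ j ∈ J, (if x j ≠ 0 then (if sstar (A j).succ (C j) = 0 then (1:ℝ) else 0) else 1))
          = ∏ j ∈ J, h4 j (A j) := by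
        rw [← Finset.prod_mul_distrib]
        apply Finset.prod_congr rfl
        intro j _
        by_cases h : x j = 0
        · simp [hh2, hh4, h]
        · simp only [hh2, hh4, h, ↓reduceIte, not_false_eq_true, ne_eq]
          by_cases hy : sstar (A j).succ (C j) = 0
          · rw [if_pos hy, if_pos hy, hy, mul_one]
          · rw [if_neg hy, if_neg hy, mul_zero]
      rw [Fstat, if_neg hS, indic_eq, hb1, hb2, hzind]
      rw [mul_sub, mul_one, add_mul, mul_assoc, hz3, hz4]
      ring
    rw [Finset.sum_congr rfl (fun A _ => dec A)]
    have T2 : ∑ A : Fin n → Fin 3, ∏ j ∈ J, h2 j (A j) = (3:ℝ)^n * ∏ j ∈ J, E2 j := by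
      rw [sum_pi3_prod J h2, Finset.prod_congr rfl (fun j _ => s2 j), factor3, hJ,
        ← mul_assoc, pow3J]
    have T3 : ∑ A : Fin n → Fin 3, ∏ j ∈ J, h3 j (A j) = (3:ℝ)^n * ∏ j ∈ J, E3 j := by
      rw [sum_pi3_prod J h3, Finset.prod_congr rfl (fun j _ => s3 j), factor3, hJ,
        ← mul_assoc, pow3J]
    have T4 : ∑ A : Fin n → Fin 3, ∏ j ∈ J, h4 j (A j) = (3:ℝ)^n * ∏ j ∈ J, E3 j := by
      rw [sum_pi3_prod J h4, Finset.prod_congr rfl (fun j _ => s4 j), factor3, hJ,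
        ← mul_assoc, pow3J]
    have sumsplit : ∑ A : Fin n → Fin 3,
        ((∏ j ∈ J, h1 j (A j)) + cw (Sset ℓ x).card * (∏ j ∈ J, h2 j (A j))
          - (∏ j ∈ J, h3 j (A j)) - cw (Sset ℓ x).card * (∏ j ∈ J, h4 j (A j)))
        = (∑ A : Fin n → Fin 3, ∏ j ∈ J, h1 j (A j))
          + cw (Sset ℓ x).card * (∑ A : Fin n → Fin 3, ∏ j ∈ J, h2 j (A j))
          - (∑ A : Fin n → Fin 3, ∏ j ∈ J, h3 j (A j))
          - cw (Sset ℓ x).card * (∑ A : Fin n → Fin 3, ∏ j ∈ J, h4 j (A j)) := by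
      simp only [Finset.sum_sub_distrib, Finset.sum_add_distrib, ← Finset.mul_sum]
    rw [sumsplit, T1, T2, T3, T4]
    have alg : cw (Sset ℓ x).card * (∏ j ∈ J, E2 j)
        - (1 + cw (Sset ℓ x).card) * (∏ j ∈ J, E3 j) = 0 := by
      by_cases hz : ∃ j ∈ Sset ℓ x, C j = 0
      · obtain ⟨j0, hj0, hc0⟩ := hz
        have hx0 : x j0 ≠ 0 := by
          have := (Finset.mem_filter.mp hj0).2.2; exact this
        have hj0J : j0 ∈ J := Sset_subset_Jset ℓ x hj0
        have hne : C j0 ≠ x j0 := by rw [hc0]; exact fun hh => hx0 hh.symm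
        have z2 : E2 j0 = 0 := by
          simp only [hE2, if_neg hx0, dta, if_neg hne, if_pos hc0]; ring
        have z3 : E3 j0 = 0 := by
          simp only [hE3, if_neg hx0, e3, if_pos hc0]
        rw [Finset.prod_eq_zero hj0J z2, Finset.prod_eq_zero hj0J z3]; ring
      · push_neg at hz
        have hsplit2 := Finset.prod_filter_mul_prod_filter_not J (fun j => x j = 0) E2
        have hsplit3 := Finset.prod_filter_mul_prod_filter_not J (fun j => x j = 0) E3
        have hfil : J.filter (fun j => ¬ x j = 0) = Sset ℓ x := by
          rw [Sset_eq_filter]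
        have eq0 : ∀ j ∈ J.filter (fun j => x j = 0), E2 j = E3 j := by
          intro j hj
          have hx := (Finset.mem_filter.mp hj).2
          simp only [hE2, hE3, if_pos hx]
        have eqhalf : ∀ j ∈ Sset ℓ x, E3 j = (1/2) * E2 j := by
          intro j hj
          have hx : x j ≠ 0 := (Finset.mem_filter.mp hj).2.2
          have hc : C j ≠ 0 := hz j hj
          simp only [hE2, hE3, if_neg hx]
          rw [e3_half (x j) (C j) hx hc, if_neg hc]
        have eqS : (∏ j ∈ Sset ℓ x, E3 j)
            = (1/2:ℝ)^(Sset ℓ x).card * ∏ j ∈ Sset ℓ x, E2 j := by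
          rw [Finset.prod_congr rfl eqhalf, Finset.prod_mul_distrib, Finset.prod_const]
        rw [← hsplit2, ← hsplit3, hfil, Finset.prod_congr rfl eq0, eqS]
        linear_combination (-((Finset.filter (fun j => x j = 0) J).prod E3
          * ∏ j ∈ Sset ℓ x, E2 j)) * cw_key (Sset ℓ x).card w1
    linear_combination (3:ℝ)^n * alg

end PopRec

namespace PopRec
variable {n : ℕ}

lemma base1_abs (ℓ : ℕ) (x : Fin n → Fin 4) (s : Sam n) : |base1 ℓ x s| ≤ 1 := by
  rw [base1, Finset.abs_prod]
  exact Finset.prod_le_one (fun j _ => abs_nonneg _) (fun j _ => g_abs _ _ _)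

lemma Sset_filter_not (ℓ : ℕ) (x : Fin n → Fin 4) :
    (Jset n ℓ).filter (fun j => ¬ x j = 0) = Sset ℓ x := by
  rw [Sset_eq_filter]

lemma base2_abs (ℓ : ℕ) (x : Fin n → Fin 4) (s : Sam n) :
    |base2 ℓ x s| ≤ 2 ^ (Sset ℓ x).card := by
  rw [base2, Finset.abs_prod]
  calc (∏ j ∈ Jset n ℓ, |if x j = 0 then g 0 (s.1 j) (s.2 j) else gh (x j) (s.1 j) (s.2 j)|)
      ≤ ∏ j ∈ Jset n ℓ, (if x j = 0 then (1:ℝ) else 2) := by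
        apply Finset.prod_le_prod (fun j _ => abs_nonneg _)
        intro j _
        by_cases h : x j = 0
        · rw [if_pos h, if_pos h]; exact g_abs _ _ _
        · rw [if_neg h, if_neg h]; exact gh_abs _ _ _
    _ = 2 ^ (Sset ℓ x).card := by
        rw [← Finset.prod_filter_mul_prod_filter_not (Jset n ℓ) (fun j => x j = 0)]
        rw [Finset.prod_congr rfl (fun j hj => if_pos (Finset.mem_filter.mp hj).2),
          Finset.prod_congr rfl (fun j hj => if_neg (Finset.mem_filter.mp hj).2),
          Finset.prod_const_one, Finset.prod_const, one_mul, Sset_filter_not]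

lemma cw_nonneg (w : ℕ) (hw : w ≠ 0) : 0 ≤ cw w := by
  have : (1:ℝ) < 2^w := one_lt_pow₀ (by norm_num) hw
  unfold cw
  exact inv_nonneg.mpr (by linarith)

lemma cw_two_pow (w : ℕ) (hw : w ≠ 0) : cw w * 2^w ≤ 2 := by
  have h2 : (2:ℝ) ≤ 2^w := by
    calc (2:ℝ) = 2^1 := (pow_one 2).symm
    _ ≤ 2^w := pow_le_pow_right₀ (by norm_num) (Nat.one_le_iff_ne_zero.mpr hw)
  have hne : (0:ℝ) < 2^w - 1 := by linarith
  rw [cw, inv_mul_le_iff₀ hne]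
  linarith

lemma Fstat_abs (ℓ : ℕ) (x : Fin n → Fin 4) (s : Sam n) : |Fstat ℓ x s| ≤ 3 := by
  rw [Fstat]
  split_ifs with hS
  · linarith [base1_abs ℓ x s]
  · have hw : (Sset ℓ x).card ≠ 0 := by simpa [Finset.card_eq_zero] using hS
    have hind : |indic ℓ x s| ≤ 1 := by
      rw [indic]; split_ifs <;> norm_num
    rw [abs_mul]
    have h1 : |base1 ℓ x s + cw (Sset ℓ x).card * base2 ℓ x s| ≤ 3 := by
      calc |base1 ℓ x s + cw (Sset ℓ x).card * base2 ℓ x s|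
          ≤ |base1 ℓ x s| + |cw (Sset ℓ x).card * base2 ℓ x s| := abs_add_le _ _
        _ ≤ 1 + cw (Sset ℓ x).card * 2^(Sset ℓ x).card := by
            have : |cw (Sset ℓ x).card * base2 ℓ x s|
                = cw (Sset ℓ x).card * |base2 ℓ x s| := by
              rw [abs_mul, abs_of_nonneg (cw_nonneg _ hw)]
            rw [this]
            have := mul_le_mul_of_nonneg_left (base2_abs ℓ x s) (cw_nonneg _ hw)
            linarith [base1_abs ℓ x s]
        _ ≤ 3 := by linarith [cw_two_pow (Sset ℓ x).card hw]
    calc |base1 ℓ x s + cw (Sset ℓ x).card * base2 ℓ x s| * |indic ℓ x s|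
        ≤ 3 * 1 := mul_le_mul h1 hind (abs_nonneg _) (by norm_num)
      _ = 3 := by ring

lemma Fstat_support (ℓ : ℕ) (x : Fin n → Fin 4) (C : Fin n → Fin 4)
    (hS : Sset ℓ x ≠ ∅) (hC : ∀ j ∈ Sset ℓ x, C j = 0) (A : Fin n → Fin 3) :
    Fstat ℓ x (A, starN (lift3 A) C) = 0 := by
  rw [Fstat, if_neg hS, indic]
  rw [if_pos, mul_zero]
  intro j hj
  show starN (lift3 A) C j = 0
  rw [starN]
  rw [hC j hj]
  exact sstar_zero _

def Ntrue (p : (Fin n → Fin 4) → ℝ) (ℓ : ℕ) (x : Fin n → Fin 4) : ℝ :=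
  ∑ C, p C * (if ∀ j ∈ Jset n ℓ, C j = x j then 1 else 0)

lemma D_expect (p : (Fin n → Fin 4) → ℝ) (φ : Sam n → ℝ) :
    ∑ t : Sam n, sampleDist p t * φ t
      = ((3:ℝ)^n)⁻¹ * ∑ C, p C * ∑ A : Fin n → Fin 3, φ (A, starN (lift3 A) C) := by
  rw [Fintype.sum_prod_type]
  simp only [sampleDist]
  have step : ∀ A : Fin n → Fin 3,
      (∑ y : Fin n → ZMod 2, (((3:ℝ)^n)⁻¹ * ∑ C, (if starN (lift3 A) C = y then p C else 0)) * φ (A, y))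
      = ((3:ℝ)^n)⁻¹ * ∑ C, p C * φ (A, starN (lift3 A) C) := by
    intro A
    have e1 : ∀ y : Fin n → ZMod 2,
        (((3:ℝ)^n)⁻¹ * ∑ C, (if starN (lift3 A) C = y then p C else 0)) * φ (A, y)
        = ((3:ℝ)^n)⁻¹ * ∑ C, (if starN (lift3 A) C = y then p C * φ (A,y) else 0) := by
      intro y
      rw [mul_assoc, Finset.sum_mul]
      congr 1
      apply Finset.sum_congr rfl
      intro C _
      rw [ite_mul, zero_mul]
    simp only [e1, ← Finset.mul_sum]
    congr 1
    rw [Finset.sum_comm]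
    apply Finset.sum_congr rfl
    intro C _
    rw [Finset.sum_ite_eq (Finset.univ) (starN (lift3 A) C) (fun y => p C * φ (A, y))]
    simp
  rw [Finset.sum_congr rfl (fun A _ => step A), ← Finset.mul_sum, Finset.sum_comm]
  congr 1
  apply Finset.sum_congr rfl
  intro C _
  rw [Finset.mul_sum]

lemma unbiased (p : (Fin n → Fin 4) → ℝ) (ℓ : ℕ) (x : Fin n → Fin 4) :
    ∑ t : Sam n, sampleDist p t * Fstat ℓ x t = Ntrue p ℓ x := by
  rw [D_expect p (Fstat ℓ x), Ntrue]
  have h3 : ((3:ℝ)^n) ≠ 0 := by positivity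
  rw [Finset.mul_sum]
  apply Finset.sum_congr rfl
  intro C _
  rw [U ℓ x C]
  field_simp

lemma D_nonneg (p : (Fin n → Fin 4) → ℝ) (hp0 : ∀ C, 0 ≤ p C) (t : Sam n) :
    0 ≤ sampleDist p t := by
  rw [sampleDist]
  apply mul_nonneg (by positivity)
  apply Finset.sum_nonneg
  intro C _
  split_ifs
  · exact hp0 C
  · exact le_refl 0

lemma D_sum_one (p : (Fin n → Fin 4) → ℝ) (hp1 : ∑ C, p C = 1) :
    ∑ t : Sam n, sampleDist p t = 1 := by
  have := D_expect p (fun _ => 1)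
  simp only [mul_one] at this
  rw [this]
  have hA : (∑ _A : Fin n → Fin 3, (1:ℝ)) = (3:ℝ)^n := by
    rw [Finset.sum_const, Finset.card_univ, Fintype.card_fun]
    simp
  simp only [hA, ← Finset.sum_mul]
  rw [hp1]
  field_simp

end PopRec

namespace PopRec
variable {n : ℕ}

lemma Ntrue_nonneg (p : (Fin n → Fin 4) → ℝ) (hp0 : ∀ C, 0 ≤ p C) (ℓ : ℕ) (x : Fin n → Fin 4) :
    0 ≤ Ntrue p ℓ x := by
  apply Finset.sum_nonneg
  intro C _
  apply mul_nonneg (hp0 C)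
  split_ifs <;> norm_num

lemma Ntrue_le_one (p : (Fin n → Fin 4) → ℝ) (hp0 : ∀ C, 0 ≤ p C) (hp1 : ∑ C, p C = 1)
    (ℓ : ℕ) (x : Fin n → Fin 4) : Ntrue p ℓ x ≤ 1 := by
  rw [← hp1]
  apply Finset.sum_le_sum
  intro C _
  split_ifs <;> simp [hp0 C]

lemma p0_le_one (p : (Fin n → Fin 4) → ℝ) (hp0 : ∀ C, 0 ≤ p C) (hp1 : ∑ C, p C = 1) :
    p (fun _ => 0) ≤ 1 := by
  rw [← hp1]
  exact Finset.single_le_sum (fun C _ => hp0 C) (Finset.mem_univ _)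

/-- second moment bound -/
lemma sqF_bound (p : (Fin n → Fin 4) → ℝ) (hp0 : ∀ C, 0 ≤ p C) (hp1 : ∑ C, p C = 1)
    (ℓ : ℕ) (x : Fin n → Fin 4) (hS : Sset ℓ x ≠ ∅) :
    ∑ t : Sam n, sampleDist p t * (Fstat ℓ x t)^2 ≤ 9 * (1 - p (fun _ => 0)) := by
  rw [D_expect p (fun t => (Fstat ℓ x t)^2)]
  have key : ∀ C : Fin n → Fin 4,
      p C * (∑ A : Fin n → Fin 3, (Fstat ℓ x (A, starN (lift3 A) C))^2)
        ≤ p C * ((3:ℝ)^n * (9 * (1 - (if C = (fun _ => 0) then 1 else 0)))) := by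
    intro C
    apply mul_le_mul_of_nonneg_left _ (hp0 C)
    by_cases hC : ∀ j ∈ Sset ℓ x, C j = 0
    · rw [Finset.sum_congr rfl (fun A _ => by
        rw [Fstat_support ℓ x C hS hC A]; norm_num : ∀ A ∈ Finset.univ,
          (Fstat ℓ x (A, starN (lift3 A) C))^2 = 0)]
      rw [Finset.sum_const_zero]
      split_ifs <;> positivity
    · have hCne : ¬ (C = (fun _ => 0)) := by
        intro h
        exact hC (fun j _ => by rw [h])
      rw [if_neg hCne]
      calc ∑ A : Fin n → Fin 3, (Fstat ℓ x (A, starN (lift3 A) C))^2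
          ≤ ∑ _A : Fin n → Fin 3, (9:ℝ) := by
            apply Finset.sum_le_sum
            intro A _
            have := Fstat_abs ℓ x (A, starN (lift3 A) C)
            nlinarith [abs_nonneg (Fstat ℓ x (A, starN (lift3 A) C)),
              sq_abs (Fstat ℓ x (A, starN (lift3 A) C))]
        _ = (3:ℝ)^n * 9 := by
            rw [Finset.sum_const, Finset.card_univ, Fintype.card_fun]; simp
        _ ≤ (3:ℝ)^n * (9 * (1 - 0)) := by norm_num
  calc ((3:ℝ)^n)⁻¹ * ∑ C, p C * (∑ A : Fin n → Fin 3, (Fstat ℓ x (A, starN (lift3 A) C))^2)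
      ≤ ((3:ℝ)^n)⁻¹ * ∑ C, p C * ((3:ℝ)^n * (9 * (1 - (if C = (fun _ => 0) then 1 else 0)))) := by
        apply mul_le_mul_of_nonneg_left _ (by positivity)
        exact Finset.sum_le_sum (fun C _ => key C)
    _ = 9 * (1 - ∑ C, p C * (if C = (fun _ => 0) then 1 else 0)) := by
        have h3 : ((3:ℝ)^n) ≠ 0 := by positivity
        have expand : ∀ C : Fin n → Fin 4,
            p C * ((3:ℝ)^n * (9 * (1 - (if C = (fun _ => 0) then 1 else 0))))
            = (3:ℝ)^n * (9 * (p C - p C * (if C = (fun _ => 0) then 1 else 0))) := by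
          intro C; ring
        rw [Finset.sum_congr rfl (fun C _ => expand C), ← Finset.mul_sum]
        rw [← mul_assoc, inv_mul_cancel₀ h3, one_mul, ← Finset.mul_sum,
          Finset.sum_sub_distrib, hp1]
    _ ≤ 9 * (1 - p (fun _ => 0)) := by
        have : (∑ C, p C * (if C = (fun _ => 0) then 1 else 0)) = p (fun _ => 0) := by
          rw [Finset.sum_congr rfl (fun C _ => by rw [mul_ite, mul_one, mul_zero] :
            ∀ C ∈ Finset.univ, p C * (if C = (fun _ => 0) then 1 else 0)
              = (if C = (fun _ => 0) then p C else 0))]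
          rw [Finset.sum_ite_eq' Finset.univ (fun _ => 0) p]
          simp
        rw [this]

/-- centered second moment (variance) bound, all cases -/
lemma var_bound (p : (Fin n → Fin 4) → ℝ) (hp0 : ∀ C, 0 ≤ p C) (hp1 : ∑ C, p C = 1)
    (ℓ : ℕ) (x : Fin n → Fin 4) :
    ∑ t : Sam n, sampleDist p t * (Fstat ℓ x t - Ntrue p ℓ x)^2
      ≤ 9 * (1 - p (fun _ => 0)) := by
  have hsum : ∑ t : Sam n, sampleDist p t * (Fstat ℓ x t - Ntrue p ℓ x)^2
      = (∑ t : Sam n, sampleDist p t * (Fstat ℓ x t)^2) - (Ntrue p ℓ x)^2 := by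
    have e : ∀ t : Sam n, sampleDist p t * (Fstat ℓ x t - Ntrue p ℓ x)^2
        = sampleDist p t * (Fstat ℓ x t)^2
          - 2 * Ntrue p ℓ x * (sampleDist p t * Fstat ℓ x t)
          + (Ntrue p ℓ x)^2 * sampleDist p t := by
      intro t; ring
    rw [Finset.sum_congr rfl (fun t _ => e t), Finset.sum_add_distrib,
      Finset.sum_sub_distrib, ← Finset.mul_sum, ← Finset.mul_sum, unbiased,
      D_sum_one p hp1]
    ring
  rw [hsum]
  by_cases hS : Sset ℓ x = ∅
  · -- x is all-zero on the window; F = base1 with |F| ≤ 1 and mean ≥ p 0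
    have hF2 : ∑ t : Sam n, sampleDist p t * (Fstat ℓ x t)^2
        ≤ ∑ t : Sam n, sampleDist p t := by
      apply Finset.sum_le_sum
      intro t _
      have habs : |Fstat ℓ x t| ≤ 1 := by
        rw [Fstat, if_pos hS]; exact base1_abs ℓ x t
      have : (Fstat ℓ x t)^2 ≤ 1 := by
        rw [← sq_abs]
        nlinarith [abs_nonneg (Fstat ℓ x t)]
      nlinarith [D_nonneg p hp0 t]
    rw [D_sum_one p hp1] at hF2
    have hmu : p (fun _ => 0) ≤ Ntrue p ℓ x := by
      rw [Ntrue]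
      have : p (fun _ => 0) * (if ∀ j ∈ Jset n ℓ, (fun _ : Fin n => (0:Fin 4)) j = x j then (1:ℝ) else 0)
          = p (fun _ => 0) := by
        rw [if_pos, mul_one]
        intro j hj
        by_contra hne
        have : j ∈ Sset ℓ x := by
          rw [Sset_eq_filter, Finset.mem_filter]
          exact ⟨hj, fun h => hne h.symm⟩
        rw [hS] at this
        exact absurd this (Finset.notMem_empty j)
      calc p (fun _ => 0) = p (fun _ => 0) * _ := this.symm
        _ ≤ Ntrue p ℓ x := by
            exact Finset.single_le_sum
              (f := fun C => p C * (if ∀ j ∈ Jset n ℓ, C j = x j then (1:ℝ) else 0))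
              (fun C _ => mul_nonneg (hp0 C) (by split_ifs <;> norm_num)) (Finset.mem_univ _)
    have hmu1 : Ntrue p ℓ x ≤ 1 := Ntrue_le_one p hp0 hp1 ℓ x
    nlinarith [p0_le_one p hp0 hp1]
  · have := sqF_bound p hp0 hp1 ℓ x hS
    nlinarith [sq_nonneg (Ntrue p ℓ x)]

end PopRec

namespace PopRec
variable {n : ℕ}

lemma exp_quad {z : ℝ} (hz : |z| ≤ 1) : Real.exp z ≤ 1 + z + z^2 := by
  have h := Real.exp_bound hz (n := 2) (by norm_num)
  have hs : (∑ m ∈ Finset.range 2, z ^ m / (m.factorial : ℝ)) = 1 + z := by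
    simp [Finset.sum_range_succ]
  rw [hs] at h
  have h3 : Real.exp z - (1+z) ≤ |z|^2 * ((3:ℝ)/4) := by
    calc Real.exp z - (1+z) ≤ |Real.exp z - (1+z)| := le_abs_self _
      _ ≤ |z|^2 * (((2:ℕ).succ : ℝ) / ((2:ℕ).factorial * 2)) := h
      _ = |z|^2 * (3/4) := by norm_num [Nat.factorial]
  nlinarith [sq_abs z, sq_nonneg z]

lemma mgf_bound (p : (Fin n → Fin 4) → ℝ) (hp0 : ∀ C, 0 ≤ p C) (hp1 : ∑ C, p C = 1)
    (ℓ : ℕ) (x : Fin n → Fin 4) (lam : ℝ) (hlam : |lam| ≤ 1/4) :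
    ∑ t : Sam n, sampleDist p t * Real.exp (lam * (Fstat ℓ x t - Ntrue p ℓ x))
      ≤ Real.exp (lam^2 * (9 * (1 - p (fun _ => 0)))) := by
  have hμ0 := Ntrue_nonneg p hp0 ℓ x
  have hμ1 := Ntrue_le_one p hp0 hp1 ℓ x
  have step1 : ∀ t : Sam n, sampleDist p t * Real.exp (lam * (Fstat ℓ x t - Ntrue p ℓ x))
      ≤ sampleDist p t * (1 + lam * (Fstat ℓ x t - Ntrue p ℓ x)
          + (lam * (Fstat ℓ x t - Ntrue p ℓ x))^2) := by
    intro t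
    apply mul_le_mul_of_nonneg_left _ (D_nonneg p hp0 t)
    apply exp_quad
    rw [abs_mul]
    have hF := Fstat_abs ℓ x t
    have h4 : |Fstat ℓ x t - Ntrue p ℓ x| ≤ 4 := by
      rw [abs_le] at hF ⊢
      constructor <;> linarith [hF.1, hF.2]
    calc |lam| * |Fstat ℓ x t - Ntrue p ℓ x| ≤ (1/4) * 4 :=
          mul_le_mul hlam h4 (abs_nonneg _) (by norm_num)
      _ = 1 := by norm_num
  have e : ∀ t : Sam n, sampleDist p t * (1 + lam * (Fstat ℓ x t - Ntrue p ℓ x)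
        + (lam * (Fstat ℓ x t - Ntrue p ℓ x))^2)
      = sampleDist p t
        + lam * (sampleDist p t * Fstat ℓ x t - Ntrue p ℓ x * sampleDist p t)
        + lam^2 * (sampleDist p t * (Fstat ℓ x t - Ntrue p ℓ x)^2) := by
    intro t; ring
  calc ∑ t : Sam n, sampleDist p t * Real.exp (lam * (Fstat ℓ x t - Ntrue p ℓ x))
      ≤ ∑ t : Sam n, sampleDist p t * (1 + lam * (Fstat ℓ x t - Ntrue p ℓ x)
          + (lam * (Fstat ℓ x t - Ntrue p ℓ x))^2) :=
        Finset.sum_le_sum (fun t _ => step1 t)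
    _ = (∑ t : Sam n, sampleDist p t)
        + lam * ((∑ t : Sam n, sampleDist p t * Fstat ℓ x t)
            - Ntrue p ℓ x * ∑ t : Sam n, sampleDist p t)
        + lam^2 * (∑ t : Sam n, sampleDist p t * (Fstat ℓ x t - Ntrue p ℓ x)^2) := by
        rw [Finset.sum_congr rfl (fun t _ => e t), Finset.sum_add_distrib,
          Finset.sum_add_distrib, ← Finset.mul_sum, ← Finset.mul_sum,
          Finset.sum_sub_distrib, ← Finset.mul_sum]
    _ = 1 + lam^2 * (∑ t : Sam n, sampleDist p t * (Fstat ℓ x t - Ntrue p ℓ x)^2) := by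
        rw [D_sum_one p hp1, unbiased p ℓ x]; ring
    _ ≤ 1 + lam^2 * (9 * (1 - p (fun _ => 0))) := by
        have := var_bound p hp0 hp1 ℓ x
        nlinarith [sq_nonneg lam]
    _ ≤ Real.exp (lam^2 * (9 * (1 - p (fun _ => 0)))) := by
        have := Real.add_one_le_exp (lam^2 * (9 * (1 - p (fun _ => 0))))
        linarith

lemma tail_bound (m : ℕ) (D : Sam n → ℝ) (hD : ∀ t, 0 ≤ D t)
    (φ : Sam n → ℝ) (lam B T : ℝ) (hlam : 0 < lam)
    (h1 : ∑ t : Sam n, D t * Real.exp (lam * φ t) ≤ Real.exp B)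
    (h2 : ∑ t : Sam n, D t * Real.exp ((-lam) * φ t) ≤ Real.exp B) :
    ∑ s : Fin m → Sam n, (∏ i, D (s i)) * (if T ≤ |∑ i, φ (s i)| then (1:ℝ) else 0)
      ≤ 2 * Real.exp ((m:ℝ) * B - lam * T) := by
  have keypt : ∀ s : Fin m → Sam n,
      (∏ i, D (s i)) * (if T ≤ |∑ i, φ (s i)| then (1:ℝ) else 0)
      ≤ Real.exp (-(lam * T)) * ((∏ i, (D (s i) * Real.exp (lam * φ (s i))))
        + (∏ i, (D (s i) * Real.exp ((-lam) * φ (s i))))) := by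
    intro s
    have hW : 0 ≤ ∏ i, D (s i) := Finset.prod_nonneg (fun i _ => hD (s i))
    have hprod1 : (∏ i, (D (s i) * Real.exp (lam * φ (s i))))
        = (∏ i, D (s i)) * Real.exp (lam * ∑ i, φ (s i)) := by
      rw [Finset.prod_mul_distrib, ← Real.exp_sum, Finset.mul_sum]
    have hprod2 : (∏ i, (D (s i) * Real.exp ((-lam) * φ (s i))))
        = (∏ i, D (s i)) * Real.exp ((-lam) * ∑ i, φ (s i)) := by
      rw [Finset.prod_mul_distrib, ← Real.exp_sum, Finset.mul_sum]
    rw [hprod1, hprod2]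
    split_ifs with hT
    · rw [mul_one]
      set X := ∑ i, φ (s i) with hX
      have hE : Real.exp (lam*T) ≤ Real.exp (lam * X) + Real.exp ((-lam) * X) := by
        rcases le_abs.mp hT with hc | hc
        · have : lam * T ≤ lam * X := mul_le_mul_of_nonneg_left hc (le_of_lt hlam)
          calc Real.exp (lam*T) ≤ Real.exp (lam*X) := Real.exp_le_exp.mpr this
            _ ≤ _ := le_add_of_nonneg_right (le_of_lt (Real.exp_pos _))
        · have : lam * T ≤ (-lam) * X := by nlinarith
          calc Real.exp (lam*T) ≤ Real.exp ((-lam)*X) := Real.exp_le_exp.mpr this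
            _ ≤ _ := le_add_of_nonneg_left (le_of_lt (Real.exp_pos _))
      have h0 : Real.exp (-(lam*T)) * Real.exp (lam*T) = 1 := by
        rw [← Real.exp_add]; simp
      calc (∏ i, D (s i)) = (Real.exp (-(lam*T)) * Real.exp (lam*T)) * (∏ i, D (s i)) := by
            rw [h0, one_mul]
        _ = Real.exp (-(lam*T)) * ((∏ i, D (s i)) * Real.exp (lam*T)) := by ring
        _ ≤ Real.exp (-(lam*T)) * ((∏ i, D (s i)) * Real.exp (lam*X)
              + (∏ i, D (s i)) * Real.exp ((-lam)*X)) := by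
            apply mul_le_mul_of_nonneg_left _ (le_of_lt (Real.exp_pos _))
            calc (∏ i, D (s i)) * Real.exp (lam*T)
                ≤ (∏ i, D (s i)) * (Real.exp (lam*X) + Real.exp ((-lam)*X)) :=
                  mul_le_mul_of_nonneg_left hE hW
              _ = _ := by ring
    · rw [mul_zero]
      positivity
  have hsum1 : (∑ t : Sam n, D t * Real.exp (lam * φ t)) ^ m
      = ∑ s : Fin m → Sam n, ∏ i, (D (s i) * Real.exp (lam * φ (s i))) := by
    rw [Fintype.sum_pow]
  have hsum2 : (∑ t : Sam n, D t * Real.exp ((-lam) * φ t)) ^ m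
      = ∑ s : Fin m → Sam n, ∏ i, (D (s i) * Real.exp ((-lam) * φ (s i))) := by
    rw [Fintype.sum_pow]
  have hnn1 : 0 ≤ ∑ t : Sam n, D t * Real.exp (lam * φ t) :=
    Finset.sum_nonneg (fun t _ => mul_nonneg (hD t) (le_of_lt (Real.exp_pos _)))
  have hnn2 : 0 ≤ ∑ t : Sam n, D t * Real.exp ((-lam) * φ t) :=
    Finset.sum_nonneg (fun t _ => mul_nonneg (hD t) (le_of_lt (Real.exp_pos _)))
  calc ∑ s : Fin m → Sam n, (∏ i, D (s i)) * (if T ≤ |∑ i, φ (s i)| then (1:ℝ) else 0)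
      ≤ ∑ s : Fin m → Sam n, Real.exp (-(lam * T))
          * ((∏ i, (D (s i) * Real.exp (lam * φ (s i))))
            + (∏ i, (D (s i) * Real.exp ((-lam) * φ (s i))))) :=
        Finset.sum_le_sum (fun s _ => keypt s)
    _ = Real.exp (-(lam * T)) * ((∑ t : Sam n, D t * Real.exp (lam * φ t)) ^ m
          + (∑ t : Sam n, D t * Real.exp ((-lam) * φ t)) ^ m) := by
        rw [← Finset.mul_sum, Finset.sum_add_distrib, hsum1, hsum2]
    _ ≤ Real.exp (-(lam * T)) * (Real.exp B ^ m + Real.exp B ^ m) := by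
        apply mul_le_mul_of_nonneg_left _ (le_of_lt (Real.exp_pos _))
        have b1 := pow_le_pow_left₀ hnn1 h1 m
        have b2 := pow_le_pow_left₀ hnn2 h2 m
        linarith
    _ = 2 * Real.exp ((m:ℝ) * B - lam * T) := by
        have : Real.exp B ^ m = Real.exp ((m:ℝ) * B) := by
          rw [Real.exp_nat_mul]
        rw [this, show Real.exp (-(lam*T)) * (Real.exp ((m:ℝ)*B) + Real.exp ((m:ℝ)*B))
          = 2*(Real.exp ((m:ℝ)*B) * Real.exp (-(lam*T))) from by ring, ← Real.exp_add]
        ring_nf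
end PopRec

namespace PopRec
variable {n : ℕ}

def trunc (ℓ : ℕ) (B : Fin n → Fin 4) : Fin n → Fin 4 :=
  fun j => if (j:ℕ) < ℓ then B j else 0

lemma trunc_trunc (ℓ ℓ' : ℕ) (h : ℓ ≤ ℓ') (B : Fin n → Fin 4) :
    trunc ℓ (trunc ℓ' B) = trunc ℓ B := by
  funext j
  simp only [trunc]
  by_cases hj : (j:ℕ) < ℓ
  · rw [if_pos hj, if_pos hj, if_pos (lt_of_lt_of_le hj h)]
  · rw [if_neg hj, if_neg hj]

lemma trunc_idem (ℓ : ℕ) (B : Fin n → Fin 4) : trunc ℓ (trunc ℓ B) = trunc ℓ B :=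
  trunc_trunc ℓ ℓ le_rfl B

lemma trunc_zero (B : Fin n → Fin 4) : trunc 0 B = (fun _ => 0) := by
  funext j; simp [trunc]

lemma trunc_all (ℓ : ℕ) (h : n ≤ ℓ) (B : Fin n → Fin 4) : trunc ℓ B = B := by
  funext j
  exact if_pos (lt_of_lt_of_le j.isLt h)

lemma trunc_agree (ℓ : ℕ) (B : Fin n → Fin 4) (j : Fin n) (hj : (j:ℕ) < ℓ) :
    trunc ℓ B j = B j := if_pos hj

lemma Ntrue_full (p : (Fin n → Fin 4) → ℝ) (B : Fin n → Fin 4) :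
    Ntrue p n B = p B := by
  rw [Ntrue]
  have e : ∀ C : Fin n → Fin 4,
      p C * (if ∀ j ∈ Jset n n, C j = B j then (1:ℝ) else 0)
      = if C = B then p C else 0 := by
    intro C
    by_cases h : C = B
    · rw [if_pos h, if_pos, mul_one]
      intro j _; rw [h]
    · rw [if_neg h, if_neg, mul_zero]
      intro hall
      apply h
      funext j
      exact hall j (by simp [Jset, j.isLt])
  rw [Finset.sum_congr rfl (fun C _ => e C), Finset.sum_ite_eq' Finset.univ B p]
  simp

lemma p_le_Ntrue_trunc (p : (Fin n → Fin 4) → ℝ) (hp0 : ∀ C, 0 ≤ p C)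
    (ℓ : ℕ) (B : Fin n → Fin 4) : p B ≤ Ntrue p ℓ (trunc ℓ B) := by
  rw [Ntrue]
  have hterm : p B * (if ∀ j ∈ Jset n ℓ, B j = trunc ℓ B j then (1:ℝ) else 0) = p B := by
    rw [if_pos, mul_one]
    intro j hj
    rw [trunc_agree ℓ B j (by simpa [Jset] using hj)]
  calc p B = _ := hterm.symm
    _ ≤ _ := Finset.single_le_sum
        (f := fun C => p C * (if ∀ j ∈ Jset n ℓ, C j = trunc ℓ B j then (1:ℝ) else 0))
        (fun C _ => mul_nonneg (hp0 C) (by split_ifs <;> norm_num)) (Finset.mem_univ B)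

def Nhat (m : ℕ) (ℓ : ℕ) (x : Fin n → Fin 4) (s : Fin m → Sam n) : ℝ :=
  (m:ℝ)⁻¹ * ∑ i, Fstat ℓ x (s i)

def alive (m : ℕ) (θ : ℝ) (s : Fin m → Sam n) : ℕ → (Fin n → Fin 4) → Prop
  | 0, _ => True
  | (ℓ+1), B => alive m θ s ℓ B ∧
      (trunc (ℓ+1) B = (fun _ => 0) ∨ θ ≤ Nhat m (ℓ+1) (trunc (ℓ+1) B) s)

open Classical in
def estimator (m : ℕ) (θ : ℝ) (s : Fin m → Sam n) (B : Fin n → Fin 4) : ℝ :=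
  if alive m θ s n B then Nhat m n B s else 0

open Classical in
def Gset (p : (Fin n → Fin 4) → ℝ) (tacc : ℝ) (ℓ : ℕ) : Finset (Fin n → Fin 4) :=
  Finset.univ.filter (fun x => trunc ℓ x = x ∧
    (x = (fun _ => 0) ∨ tacc ≤ Ntrue p ℓ x))

open Classical in
def XXset (p : (Fin n → Fin 4) → ℝ) (tacc : ℝ) (ℓ : ℕ) : Finset (Fin n → Fin 4) :=
  Finset.univ.filter (fun x => trunc ℓ x = x ∧ trunc (ℓ-1) x ∈ Gset p tacc (ℓ-1))

def goodEv (p : (Fin n → Fin 4) → ℝ) (tacc : ℝ) (m : ℕ) (s : Fin m → Sam n) : Prop :=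
  ∀ ℓ, ℓ < n → ∀ x ∈ XXset p tacc (ℓ+1),
    |Nhat m (ℓ+1) x s - Ntrue p (ℓ+1) x| ≤ tacc

lemma not_alive_first_fail (m : ℕ) (θ : ℝ) (s : Fin m → Sam n) (B : Fin n → Fin 4) :
    ∀ N, ¬ alive m θ s N B → ∃ k < N, alive m θ s k B ∧ ¬ alive m θ s (k+1) B := by
  intro N
  induction N with
  | zero => intro h; exact absurd trivial h
  | succ N ih =>
    intro h
    by_cases hN : alive m θ s N B
    · exact ⟨N, Nat.lt_succ_self N, hN, h⟩
    · obtain ⟨k, hk, h1, h2⟩ := ih hN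
      exact ⟨k, lt_trans hk (Nat.lt_succ_self N), h1, h2⟩

lemma alive_G (p : (Fin n → Fin 4) → ℝ) (tacc : ℝ) (htacc : 0 < tacc)
    (m : ℕ) (s : Fin m → Sam n) (hE : goodEv p tacc m s) :
    ∀ ℓ, ℓ ≤ n → ∀ B, alive m (2*tacc) s ℓ B → trunc ℓ B ∈ Gset p tacc ℓ := by
  intro ℓ
  induction ℓ with
  | zero =>
    intro _ B _
    rw [Gset, Finset.mem_filter]
    exact ⟨Finset.mem_univ _, trunc_idem 0 B, Or.inl (trunc_zero B)⟩
  | succ ℓ ih =>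
    intro hn B hal
    obtain ⟨hal', hor⟩ := hal
    have hG := ih (le_of_lt (Nat.lt_of_succ_le hn)) B hal'
    have hXX : trunc (ℓ+1) B ∈ XXset p tacc (ℓ+1) := by
      rw [XXset, Finset.mem_filter]
      refine ⟨Finset.mem_univ _, trunc_idem (ℓ+1) B, ?_⟩
      have : (ℓ+1) - 1 = ℓ := rfl
      rw [this, trunc_trunc ℓ (ℓ+1) (Nat.le_succ ℓ) B]
      exact hG
    have hacc := hE ℓ (Nat.lt_of_succ_le hn) (trunc (ℓ+1) B) hXX
    rw [Gset, Finset.mem_filter]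
    refine ⟨Finset.mem_univ _, trunc_idem (ℓ+1) B, ?_⟩
    rcases hor with h0 | hbig
    · exact Or.inl h0
    · right
      rw [abs_le] at hacc
      linarith [hacc.1]

/-- Deterministic correctness of the estimator on the good event. -/
lemma estimator_correct (p : (Fin n → Fin 4) → ℝ) (hp0 : ∀ C, 0 ≤ p C)
    (hn : 1 ≤ n)
    (tacc : ℝ) (htacc : 0 < tacc) (m : ℕ) (s : Fin m → Sam n)
    (hE : goodEv p tacc m s) (B : Fin n → Fin 4) :
    |estimator m (2*tacc) s B - p B| ≤ 3 * tacc := by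
  classical
  obtain ⟨n', rfl⟩ : ∃ n', n = n' + 1 := ⟨n - 1, (Nat.succ_pred_eq_of_pos hn).symm⟩
  rw [estimator]
  split_ifs with hal
  · -- alive: accurate estimate at the full-length node
    have hB : trunc (n'+1) B = B := trunc_all (n'+1) le_rfl B
    have hXX : B ∈ XXset p tacc (n'+1) := by
      rw [XXset, Finset.mem_filter]
      refine ⟨Finset.mem_univ _, by rw [← hB, trunc_idem, hB], ?_⟩
      have h1 : (n'+1) - 1 = n' := rfl
      rw [h1, ← hB, trunc_trunc n' (n'+1) (Nat.le_succ n') B]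
      exact alive_G p tacc htacc m s hE n' (Nat.le_succ n') B hal.1
    have hacc := hE n' (Nat.lt_succ_self n') B hXX
    rw [Ntrue_full] at hacc
    calc |Nhat m (n'+1) B s - p B| ≤ tacc := hacc
      _ ≤ 3 * tacc := by linarith
  · -- pruned: p B is small
    rw [zero_sub, abs_neg, abs_of_nonneg (hp0 B)]
    obtain ⟨k, hk, hak, hnak⟩ := not_alive_first_fail m (2*tacc) s B (n'+1) hal
    have hor : ¬(trunc (k+1) B = (fun _ => 0)
        ∨ 2*tacc ≤ Nhat m (k+1) (trunc (k+1) B) s) := by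
      intro hor; exact hnak ⟨hak, hor⟩
    push_neg at hor
    obtain ⟨hne0, hsmall⟩ := hor
    have hXX : trunc (k+1) B ∈ XXset p tacc (k+1) := by
      rw [XXset, Finset.mem_filter]
      refine ⟨Finset.mem_univ _, trunc_idem (k+1) B, ?_⟩
      have h1 : (k+1) - 1 = k := rfl
      rw [h1, trunc_trunc k (k+1) (Nat.le_succ k) B]
      exact alive_G p tacc htacc m s hE k (by omega) B hak
    have hacc := hE k hk (trunc (k+1) B) hXX
    rw [abs_le] at hacc
    calc p B ≤ Ntrue p (k+1) (trunc (k+1) B) := p_le_Ntrue_trunc p hp0 (k+1) B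
      _ ≤ 3 * tacc := by linarith [hacc.2]

end PopRec

namespace PopRec
variable {n : ℕ}

lemma Gset_card (p : (Fin n → Fin 4) → ℝ) (hp0 : ∀ C, 0 ≤ p C) (hp1 : ∑ C, p C = 1)
    (tacc : ℝ) (htacc : 0 < tacc) (ℓ : ℕ) :
    ((Gset p tacc ℓ).card : ℝ) ≤ 1 + (1 - p (fun _ => 0)) / tacc := by
  classical
  set G' : Finset (Fin n → Fin 4) :=
    (Gset p tacc ℓ).filter (fun x => x ≠ (fun _ => 0)) with hG'
  have hsub : Gset p tacc ℓ ⊆ insert (fun _ => 0) G' := by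
    intro x hx
    by_cases h0 : x = (fun _ => 0)
    · rw [h0]; exact Finset.mem_insert_self _ _
    · exact Finset.mem_insert_of_mem (Finset.mem_filter.mpr ⟨hx, h0⟩)
  have hcard1 : (Gset p tacc ℓ).card ≤ G'.card + 1 := by
    calc (Gset p tacc ℓ).card ≤ (insert (fun _ => 0) G').card := Finset.card_le_card hsub
      _ ≤ G'.card + 1 := Finset.card_insert_le _ _
  -- mass bound on nonzero members
  have hmass : ∀ x ∈ G', tacc ≤ Ntrue p ℓ x := by
    intro x hx
    obtain ⟨hxG, hxne⟩ := Finset.mem_filter.mp hx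
    obtain ⟨_, _, hor⟩ := Finset.mem_filter.mp hxG
    rcases hor with h | h
    · exact absurd h hxne
    · exact h
  have hGfix : ∀ x ∈ G', trunc ℓ x = x := by
    intro x hx
    exact (Finset.mem_filter.mp (Finset.mem_filter.mp hx).1).2.1
  have hsum_le : ∑ x ∈ G', Ntrue p ℓ x ≤ 1 - p (fun _ => 0) := by
    have swap : ∑ x ∈ G', Ntrue p ℓ x
        = ∑ C, ∑ x ∈ G', p C * (if ∀ j ∈ Jset n ℓ, C j = x j then (1:ℝ) else 0) := by
      simp only [Ntrue]
      rw [Finset.sum_comm]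
    rw [swap]
    have inner : ∀ C : Fin n → Fin 4,
        (∑ x ∈ G', p C * (if ∀ j ∈ Jset n ℓ, C j = x j then (1:ℝ) else 0))
          ≤ p C * (if C = (fun _ => 0) then 0 else 1) := by
      intro C
      rw [← Finset.mul_sum]
      apply mul_le_mul_of_nonneg_left _ (hp0 C)
      by_cases hC : C = (fun _ => 0)
      · rw [if_pos hC]
        apply le_of_eq
        apply Finset.sum_eq_zero
        intro x hx
        rw [if_neg]
        intro hall
        apply (Finset.mem_filter.mp hx).2
        funext j
        by_cases hj : (j:ℕ) < ℓ
        · have := hall j (by simp [Jset, hj])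
          rw [← this, hC]
        · have := congrFun (hGfix x hx) j
          rw [trunc, if_neg hj] at this
          rw [← this]
      · rw [if_neg hC]
        calc ∑ x ∈ G', (if ∀ j ∈ Jset n ℓ, C j = x j then (1:ℝ) else 0)
            ≤ ∑ x ∈ G', (if x = trunc ℓ C then (1:ℝ) else 0) := by
              apply Finset.sum_le_sum
              intro x hx
              by_cases hm : ∀ j ∈ Jset n ℓ, C j = x j
              · rw [if_pos hm, if_pos]
                funext j
                by_cases hj : (j:ℕ) < ℓ
                · rw [trunc, if_pos hj, ← hm j (by simp [Jset, hj])]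
                · have := congrFun (hGfix x hx) j
                  rw [trunc, if_neg hj] at this ⊢
                  exact this.symm
              · rw [if_neg hm]
                split_ifs <;> norm_num
          _ ≤ ∑ x : Fin n → Fin 4, (if x = trunc ℓ C then (1:ℝ) else 0) := by
              apply Finset.sum_le_sum_of_subset_of_nonneg (Finset.subset_univ G')
              intro x _ _
              split_ifs <;> norm_num
          _ = 1 := by
              rw [Finset.sum_ite_eq' Finset.univ (trunc ℓ C) (fun _ => (1:ℝ))]
              simp
    calc ∑ C, ∑ x ∈ G', p C * (if ∀ j ∈ Jset n ℓ, C j = x j then (1:ℝ) else 0)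
        ≤ ∑ C, p C * (if C = (fun _ => 0) then 0 else 1) :=
          Finset.sum_le_sum (fun C _ => inner C)
      _ = 1 - p (fun _ => 0) := by
          have e : ∀ C : Fin n → Fin 4, p C * (if C = (fun _ => 0) then (0:ℝ) else 1)
              = p C - (if C = (fun _ => 0) then p C else 0) := by
            intro C; split_ifs <;> ring
          rw [Finset.sum_congr rfl (fun C _ => e C), Finset.sum_sub_distrib, hp1,
            Finset.sum_ite_eq' Finset.univ (fun _ => 0) p]
          simp
  have hG'card : (G'.card : ℝ) ≤ (1 - p (fun _ => 0)) / tacc := by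
    rw [le_div_iff₀ htacc]
    calc (G'.card : ℝ) * tacc ≤ ∑ x ∈ G', Ntrue p ℓ x := by
          have := Finset.card_nsmul_le_sum G' (Ntrue p ℓ) tacc hmass
          rw [nsmul_eq_mul] at this
          exact this
      _ ≤ 1 - p (fun _ => 0) := hsum_le
  calc ((Gset p tacc ℓ).card : ℝ) ≤ (G'.card : ℝ) + 1 := by
        exact_mod_cast hcard1
    _ ≤ 1 + (1 - p (fun _ => 0)) / tacc := by linarith

lemma XXset_card (p : (Fin n → Fin 4) → ℝ) (tacc : ℝ) (ℓ : ℕ) (hℓ : ℓ < n) :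
    (XXset p tacc (ℓ+1)).card ≤ 4 * (Gset p tacc ℓ).card := by
  classical
  have hle : (XXset p tacc (ℓ+1)).card
      ≤ ((Gset p tacc ℓ) ×ˢ (Finset.univ : Finset (Fin 4))).card := by
    apply Finset.card_le_card_of_injOn (fun x => (trunc ℓ x, x ⟨ℓ, hℓ⟩))
    · intro x hx
      obtain ⟨_, hfix, hmem⟩ := Finset.mem_filter.mp hx
      rw [Finset.mem_coe, Finset.mem_product]
      constructor
      · exact hmem
      · exact Finset.mem_univ _
    · intro x hx y hy hxy
      have hfx := (Finset.mem_filter.mp hx).2.1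
      have hfy := (Finset.mem_filter.mp hy).2.1
      have h1 : trunc ℓ x = trunc ℓ y := congrArg Prod.fst hxy
      have h2 : x ⟨ℓ, hℓ⟩ = y ⟨ℓ, hℓ⟩ := congrArg Prod.snd hxy
      funext j
      rcases lt_trichotomy (j:ℕ) ℓ with hj | hj | hj
      · have ex := congrFun h1 j
        rw [trunc, trunc, if_pos hj, if_pos hj] at ex
        exact ex
      · have hje : j = ⟨ℓ, hℓ⟩ := Fin.ext hj
        rw [hje]; exact h2
      · have hjx := congrFun hfx j
        have hjy := congrFun hfy j
        rw [trunc, if_neg (by omega)] at hjx hjy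
        rw [← hjx, ← hjy]
  rw [Finset.card_product, Finset.card_univ, Fintype.card_fin] at hle
  omega

end PopRec

namespace PopRec
variable {n : ℕ}

lemma ite_01_nonneg (c : Prop) [Decidable c] : (0:ℝ) ≤ if c then 1 else 0 := by
  split_ifs <;> norm_num

lemma Wsum_one (p : (Fin n → Fin 4) → ℝ) (hp1 : ∑ C, p C = 1) (m : ℕ) :
    ∑ s : Fin m → Sam n, ∏ i, sampleDist p (s i) = 1 := by
  rw [← Fintype.sum_pow, D_sum_one p hp1, one_pow]

lemma node_fail (p : (Fin n → Fin 4) → ℝ) (hp0 : ∀ C, 0 ≤ p C) (hp1 : ∑ C, p C = 1)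
    (m : ℕ) (ℓ : ℕ) (x : Fin n → Fin 4) (lam tacc : ℝ)
    (hlam : 0 < lam) (hlam4 : lam ≤ 1/4) :
    ∑ s : Fin m → Sam n, (∏ i, sampleDist p (s i)) *
        (if tacc < |Nhat m ℓ x s - Ntrue p ℓ x| then (1:ℝ) else 0)
      ≤ 2 * Real.exp ((m:ℝ) * (lam^2 * (9*(1 - p (fun _ => 0)))) - lam * ((m:ℝ) * tacc)) := by
  classical
  have habs : |lam| ≤ 1/4 := by rw [abs_of_pos hlam]; exact hlam4
  have habs' : |(-lam)| ≤ 1/4 := by rw [abs_neg]; exact habs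
  have h1 := mgf_bound p hp0 hp1 ℓ x lam habs
  have h2 := mgf_bound p hp0 hp1 ℓ x (-lam) habs'
  have h2' : ∑ t : Sam n, sampleDist p t *
      Real.exp ((-lam) * (Fstat ℓ x t - Ntrue p ℓ x))
      ≤ Real.exp (lam^2 * (9 * (1 - p (fun _ => 0)))) := by
    have : (-lam)^2 = lam^2 := by ring
    rw [← this]; exact h2
  have step : ∀ s : Fin m → Sam n,
      (∏ i, sampleDist p (s i)) * (if tacc < |Nhat m ℓ x s - Ntrue p ℓ x| then (1:ℝ) else 0)
      ≤ (∏ i, sampleDist p (s i)) *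
        (if (m:ℝ) * tacc ≤ |∑ i, (Fstat ℓ x (s i) - Ntrue p ℓ x)| then (1:ℝ) else 0) := by
    intro s
    apply mul_le_mul_of_nonneg_left _ (Finset.prod_nonneg (fun i _ => D_nonneg p hp0 (s i)))
    by_cases hcond : tacc < |Nhat m ℓ x s - Ntrue p ℓ x|
    · rw [if_pos hcond, if_pos]
      rcases Nat.eq_zero_or_pos m with hm | hm
      · subst hm; simp
      · have hmR : (0:ℝ) < m := by exact_mod_cast hm
        have hsum : ∑ i, (Fstat ℓ x (s i) - Ntrue p ℓ x)
            = (m:ℝ) * (Nhat m ℓ x s - Ntrue p ℓ x) := by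
          rw [Finset.sum_sub_distrib, Finset.sum_const, Finset.card_univ, Fintype.card_fin,
            Nhat]
          field_simp
          rw [nsmul_eq_mul]
        rw [hsum, abs_mul, abs_of_pos hmR]
        apply mul_le_mul_of_nonneg_left (le_of_lt hcond) (le_of_lt hmR)
    · rw [if_neg hcond]
      split_ifs <;> norm_num
  calc ∑ s : Fin m → Sam n, (∏ i, sampleDist p (s i)) *
        (if tacc < |Nhat m ℓ x s - Ntrue p ℓ x| then (1:ℝ) else 0)
      ≤ ∑ s : Fin m → Sam n, (∏ i, sampleDist p (s i)) *
        (if (m:ℝ) * tacc ≤ |∑ i, (Fstat ℓ x (s i) - Ntrue p ℓ x)| then (1:ℝ) else 0) :=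
        Finset.sum_le_sum (fun s _ => step s)
    _ ≤ 2 * Real.exp ((m:ℝ) * (lam^2 * (9*(1 - p (fun _ => 0)))) - lam * ((m:ℝ) * tacc)) :=
        tail_bound m (sampleDist p) (D_nonneg p hp0)
          (fun t => Fstat ℓ x t - Ntrue p ℓ x) lam
          (lam^2 * (9 * (1 - p (fun _ => 0)))) ((m:ℝ) * tacc) hlam h1 h2'

open Classical in
lemma fail_prob (p : (Fin n → Fin 4) → ℝ) (hp0 : ∀ C, 0 ≤ p C) (hp1 : ∑ C, p C = 1)
    (m : ℕ) (tacc lam : ℝ) (hlam : 0 < lam) (hlam4 : lam ≤ 1/4) :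
    ∑ s : Fin m → Sam n, (∏ i, sampleDist p (s i)) *
        (if goodEv p tacc m s then (0:ℝ) else 1)
      ≤ (∑ ℓ ∈ Finset.range n, ((XXset p tacc (ℓ+1)).card : ℝ))
        * (2 * Real.exp ((m:ℝ) * (lam^2 * (9*(1 - p (fun _ => 0)))) - lam * ((m:ℝ) * tacc))) := by
  classical
  have hptw : ∀ s : Fin m → Sam n, (if goodEv p tacc m s then (0:ℝ) else 1)
      ≤ ∑ ℓ ∈ Finset.range n, ∑ x ∈ XXset p tacc (ℓ+1),
          (if tacc < |Nhat m (ℓ+1) x s - Ntrue p (ℓ+1) x| then (1:ℝ) else 0) := by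
    intro s
    by_cases hg : goodEv p tacc m s
    · rw [if_pos hg]
      apply Finset.sum_nonneg
      intro ℓ _
      apply Finset.sum_nonneg
      intro x _
      split_ifs <;> norm_num
    · rw [if_neg hg]
      rw [goodEv] at hg
      push_neg at hg
      obtain ⟨ℓ, hℓ, x, hx, hbad⟩ := hg
      have inner1 : (1:ℝ) ≤ ∑ x' ∈ XXset p tacc (ℓ+1),
          (if tacc < |Nhat m (ℓ+1) x' s - Ntrue p (ℓ+1) x'| then (1:ℝ) else 0) := by
        have hterm : (if tacc < |Nhat m (ℓ+1) x s - Ntrue p (ℓ+1) x| then (1:ℝ) else 0) = 1 :=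
          if_pos hbad
        calc (1:ℝ) = _ := hterm.symm
          _ ≤ _ := Finset.single_le_sum
              (f := fun x' => if tacc < |Nhat m (ℓ+1) x' s - Ntrue p (ℓ+1) x'| then (1:ℝ) else 0)
              (fun x' _ => ite_01_nonneg _) hx
      calc (1:ℝ) ≤ _ := inner1
        _ ≤ _ := Finset.single_le_sum
            (f := fun ℓ => ∑ x' ∈ XXset p tacc (ℓ+1),
              (if tacc < |Nhat m (ℓ+1) x' s - Ntrue p (ℓ+1) x'| then (1:ℝ) else 0))
            (fun ℓ' _ => Finset.sum_nonneg (fun x' _ => ite_01_nonneg _))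
            (Finset.mem_range.mpr hℓ)
  calc ∑ s : Fin m → Sam n, (∏ i, sampleDist p (s i)) *
        (if goodEv p tacc m s then (0:ℝ) else 1)
      ≤ ∑ s : Fin m → Sam n, (∏ i, sampleDist p (s i)) *
          (∑ ℓ ∈ Finset.range n, ∑ x ∈ XXset p tacc (ℓ+1),
            (if tacc < |Nhat m (ℓ+1) x s - Ntrue p (ℓ+1) x| then (1:ℝ) else 0)) := by
        apply Finset.sum_le_sum
        intro s _
        exact mul_le_mul_of_nonneg_left (hptw s)
          (Finset.prod_nonneg (fun i _ => D_nonneg p hp0 (s i)))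
    _ = ∑ ℓ ∈ Finset.range n, ∑ x ∈ XXset p tacc (ℓ+1),
          ∑ s : Fin m → Sam n, (∏ i, sampleDist p (s i)) *
            (if tacc < |Nhat m (ℓ+1) x s - Ntrue p (ℓ+1) x| then (1:ℝ) else 0) := by
        simp_rw [Finset.mul_sum]
        rw [Finset.sum_comm]
        apply Finset.sum_congr rfl
        intro ℓ _
        rw [Finset.sum_comm]
    _ ≤ ∑ ℓ ∈ Finset.range n, ∑ _x ∈ XXset p tacc (ℓ+1),
          (2 * Real.exp ((m:ℝ) * (lam^2 * (9*(1 - p (fun _ => 0)))) - lam * ((m:ℝ) * tacc))) := by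
        apply Finset.sum_le_sum
        intro ℓ _
        apply Finset.sum_le_sum
        intro x _
        exact node_fail p hp0 hp1 m (ℓ+1) x lam tacc hlam hlam4
    _ = (∑ ℓ ∈ Finset.range n, ((XXset p tacc (ℓ+1)).card : ℝ))
        * (2 * Real.exp ((m:ℝ) * (lam^2 * (9*(1 - p (fun _ => 0)))) - lam * ((m:ℝ) * tacc))) := by
        rw [Finset.sum_mul]
        apply Finset.sum_congr rfl
        intro ℓ _
        rw [Finset.sum_const, nsmul_eq_mul]

end PopRec

namespace PopRec
variable {n : ℕ}

lemma pB_le_eta (p : (Fin n → Fin 4) → ℝ) (hp0 : ∀ C, 0 ≤ p C) (hp1 : ∑ C, p C = 1)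
    (B : Fin n → Fin 4) (hB : B ≠ (fun _ => 0)) : p B ≤ 1 - p (fun _ => 0) := by
  have hpair : p B + p (fun _ => 0) ≤ 1 := by
    rw [← hp1]
    have := Finset.sum_le_sum_of_subset_of_nonneg
      (Finset.subset_univ ({B, (fun _ => 0)} : Finset (Fin n → Fin 4)))
      (fun C _ _ => hp0 C)
    rwa [Finset.sum_pair hB] at this
  linarith

open Classical in
lemma trivial_branch (m : ℕ) (ε δ ηest : ℝ)
    (hε0 : 0 < ε) (hε25 : 25/26 ≤ ε) (hε1 : ε < 1) (hδ0 : 0 < δ) (hηest : 0 < ηest) :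
    ∃ f : (Fin m → Sam n) → ((Fin n → Fin 4) → ℝ),
      ∀ p : (Fin n → Fin 4) → ℝ, (∀ C, 0 ≤ p C) → (∑ C, p C = 1) →
        ηest / 5 ≤ 1 - p (fun _ => 0) → 1 - p (fun _ => 0) ≤ 5 * ηest →
        (∑ s : Fin m → Sam n,
          (if ∀ B, |f s B - p B| ≤ ε * (1 - p (fun _ => 0)) then
            ∏ i, sampleDist p (s i) else 0)) ≥ 1 - δ := by
  refine ⟨fun _ B => if B = (fun _ => 0) then 1 - ε * ηest / 5 else ε * ηest / 5, ?_⟩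
  intro p hp0 hp1 hb1 hb2
  set η := 1 - p (fun _ => 0) with hη
  have hη0 : 0 < η := lt_of_lt_of_le (by positivity) hb1
  have hgood : ∀ B : Fin n → Fin 4,
      |(if B = (fun _ => 0) then 1 - ε * ηest / 5 else ε * ηest / 5) - p B| ≤ ε * η := by
    intro B
    have hkey : (1 - ε) * η ≤ ε * ηest / 5 := by nlinarith
    have hc : ε * ηest / 5 ≤ ε * η := by nlinarith
    by_cases hB : B = (fun _ => 0)
    · rw [if_pos hB, hB]
      rw [abs_le]
      constructor
      · nlinarith
      · nlinarith
    · rw [if_neg hB, abs_le]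
      have h1 : p B ≤ η := pB_le_eta p hp0 hp1 B hB
      have h2 : 0 ≤ p B := hp0 B
      constructor
      · nlinarith
      · nlinarith
  have : ∀ s : Fin m → Sam n,
      (if ∀ B, |(if B = (fun _ => 0) then 1 - ε * ηest / 5 else ε * ηest / 5) - p B| ≤ ε * η
        then ∏ i, sampleDist p (s i) else 0) = ∏ i, sampleDist p (s i) := by
    intro s
    rw [if_pos (fun B => hgood B)]
  rw [Finset.sum_congr rfl (fun s _ => this s), Wsum_one p hp1 m]
  linarith

end PopRec

namespace PopRec

open Classical in
lemma main_branch (n : ℕ) (hn : 1 ≤ n) (m : ℕ) (ε δ ηest : ℝ)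
    (hε0 : 0 < ε) (hε1 : ε ≤ 25/26) (hδ0 : 0 < δ) (hδ1 : δ < 1) (hηest : 0 < ηest)
    (hm : (m:ℝ) ≥ 10^8 * Real.log ((n:ℝ) / (ε * δ)) / (ε^2 * ηest)) :
    ∃ f : (Fin m → Sam n) → ((Fin n → Fin 4) → ℝ),
      ∀ p : (Fin n → Fin 4) → ℝ, (∀ C, 0 ≤ p C) → (∑ C, p C = 1) →
        ηest / 5 ≤ 1 - p (fun _ => 0) → 1 - p (fun _ => 0) ≤ 5 * ηest →
        (∑ s : Fin m → Sam n,
          (if ∀ B, |f s B - p B| ≤ ε * (1 - p (fun _ => 0)) then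
            ∏ i, sampleDist p (s i) else 0)) ≥ 1 - δ := by
  set tacc := ε * ηest / 40 with htaccdef
  set lam := ε / 3600 with hlamdef
  have htacc : 0 < tacc := by rw [htaccdef]; positivity
  have hlam : 0 < lam := by rw [hlamdef]; positivity
  have hlam4 : lam ≤ 1/4 := by rw [hlamdef]; nlinarith
  refine ⟨estimator m (2 * tacc), ?_⟩
  intro p hp0 hp1 hb1 hb2
  set η := 1 - p (fun _ => 0) with hη
  have hη0 : 0 < η := lt_of_lt_of_le (by positivity) hb1
  -- numbers
  set X : ℝ := (n:ℝ) / (ε * δ) with hXdef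
  have hn1 : (1:ℝ) ≤ (n:ℝ) := by exact_mod_cast hn
  have hX : (26/25 : ℝ) ≤ X := by
    rw [hXdef, le_div_iff₀ (by positivity)]
    nlinarith
  have hX1 : (1:ℝ) ≤ X := le_trans (by norm_num) hX
  have hX0 : (0:ℝ) < X := lt_of_lt_of_le (by norm_num) hX
  set L : ℝ := Real.log X with hLdef
  have hL0 : 0 ≤ L := Real.log_nonneg hX1
  have hmKL : 10^8 * L ≤ (m:ℝ) * (ε^2 * ηest) := by
    rw [ge_iff_le, div_le_iff₀ (by positivity)] at hm
    linarith
  have hm0 : (0:ℝ) ≤ (m:ℝ) := Nat.cast_nonneg m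
  -- exponent bound
  have hexp : (m:ℝ) * (lam^2 * (9*(1 - p (fun _ => 0)))) - lam * ((m:ℝ) * tacc)
      ≤ -(347 * L) := by
    have h1 : lam^2 * (9 * (1 - p (fun _ => 0))) ≤ ε^2 * ηest / 288000 := by
      rw [hlamdef]
      nlinarith
    have h2 : lam * tacc = ε^2 * ηest / 144000 := by
      rw [hlamdef, htaccdef]; ring
    have h3 : (m:ℝ) * (lam^2 * (9*(1 - p (fun _ => 0)))) ≤ (m:ℝ) * (ε^2 * ηest / 288000) :=
      mul_le_mul_of_nonneg_left h1 hm0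
    have h4 : lam * ((m:ℝ) * tacc) = (m:ℝ) * (ε^2 * ηest) / 144000 := by
      rw [show lam * ((m:ℝ) * tacc) = (m:ℝ) * (lam * tacc) by ring, h2]; ring
    have h3' : (m:ℝ) * (lam^2 * (9*(1 - p (fun _ => 0)))) ≤ (m:ℝ) * (ε^2 * ηest) / 288000 := by
      calc (m:ℝ) * (lam^2 * (9*(1 - p (fun _ => 0)))) ≤ (m:ℝ) * (ε^2 * ηest / 288000) := h3
        _ = (m:ℝ) * (ε^2 * ηest) / 288000 := by ring
    linarith
  have hexp2 : Real.exp ((m:ℝ) * (lam^2 * (9*(1 - p (fun _ => 0)))) - lam * ((m:ℝ) * tacc))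
      ≤ (X ^ (347:ℕ))⁻¹ := by
    have e1 : Real.exp (-(347 * L)) = (X ^ (347:ℕ))⁻¹ := by
      rw [Real.exp_neg]
      congr 1
      rw [show (347:ℝ) * L = (347:ℕ) * L by push_cast; ring, Real.exp_nat_mul,
        hLdef, Real.exp_log hX0]
    rw [← e1]
    exact Real.exp_le_exp.mpr hexp
  -- cardinality bound
  have hcard : (∑ ℓ ∈ Finset.range n, ((XXset p tacc (ℓ+1)).card : ℝ))
      ≤ (n:ℝ) * (804 / ε) := by
    have hper : ∀ ℓ ∈ Finset.range n, ((XXset p tacc (ℓ+1)).card : ℝ) ≤ 804 / ε := by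
      intro ℓ hℓ
      have h4G := XXset_card p tacc ℓ (Finset.mem_range.mp hℓ)
      have hG := Gset_card p hp0 hp1 tacc htacc ℓ
      have hratio : (1 - p (fun _ => 0)) / tacc ≤ 200 / ε := by
        rw [htaccdef, div_le_div_iff₀ (by positivity) hε0]
        nlinarith
      have h1ε : (1:ℝ) ≤ 1/ε := by
        rw [le_div_iff₀ hε0]; linarith
      calc ((XXset p tacc (ℓ+1)).card : ℝ) ≤ 4 * ((Gset p tacc ℓ).card : ℝ) := by
            exact_mod_cast h4G
        _ ≤ 4 * (1 + 200/ε) := by linarith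
        _ ≤ 804 / ε := by
            have : (4:ℝ) * (1 + 200/ε) = 4 + 800/ε := by ring
            rw [this]
            have : (4:ℝ) ≤ 4/ε := by
              rw [le_div_iff₀ hε0]; linarith
            have e2 : (804:ℝ)/ε = 4/ε + 800/ε := by ring
            linarith
    calc (∑ ℓ ∈ Finset.range n, ((XXset p tacc (ℓ+1)).card : ℝ))
        ≤ ∑ _ℓ ∈ Finset.range n, (804/ε) := Finset.sum_le_sum hper
      _ = (n:ℝ) * (804/ε) := by
          rw [Finset.sum_const, Finset.card_range, nsmul_eq_mul]
  -- failure probability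
  have hfail : ∑ s : Fin m → Sam n, (∏ i, sampleDist p (s i)) *
      (if goodEv p tacc m s then (0:ℝ) else 1) ≤ δ := by
    have hXpow : (1608:ℝ) ≤ X ^ (346:ℕ) := by
      have h25 : (2:ℝ) ≤ X ^ (25:ℕ) := by
        calc (2:ℝ) ≤ (26/25:ℝ)^(25:ℕ) := by norm_num
          _ ≤ X ^ (25:ℕ) := pow_le_pow_left₀ (by norm_num) hX 25
      calc (1608:ℝ) ≤ 2^(13:ℕ) := by norm_num
        _ ≤ (X^(25:ℕ))^(13:ℕ) := pow_le_pow_left₀ (by norm_num) h25 13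
        _ = X^(325:ℕ) := by rw [← pow_mul]
        _ ≤ X^(346:ℕ) := pow_le_pow_right₀ hX1 (by norm_num)
    have hXpos : (0:ℝ) < X ^ (347:ℕ) := by positivity
    calc ∑ s : Fin m → Sam n, (∏ i, sampleDist p (s i)) *
          (if goodEv p tacc m s then (0:ℝ) else 1)
        ≤ (∑ ℓ ∈ Finset.range n, ((XXset p tacc (ℓ+1)).card : ℝ))
          * (2 * Real.exp ((m:ℝ) * (lam^2 * (9*(1 - p (fun _ => 0)))) - lam * ((m:ℝ) * tacc))) :=
          fail_prob p hp0 hp1 m tacc lam hlam hlam4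
      _ ≤ ((n:ℝ) * (804/ε)) * (2 * (X ^ (347:ℕ))⁻¹) := by
          apply mul_le_mul hcard _ (by positivity) (by positivity)
          have := hexp2
          linarith
      _ ≤ δ := by
          rw [show ((n:ℝ) * (804/ε)) * (2 * (X ^ (347:ℕ))⁻¹)
            = (1608 * ((n:ℝ)/ε)) * (X ^ (347:ℕ))⁻¹ by ring]
          rw [mul_inv_le_iff₀ hXpos]
          have hXsplit : X ^ (347:ℕ) = X * X ^ (346:ℕ) := by
            rw [← pow_succ']
          rw [hXsplit]
          have hδX : δ * X = (n:ℝ)/ε := by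
            rw [hXdef]
            field_simp
          calc 1608 * ((n:ℝ)/ε) = δ * X * 1608 := by rw [hδX]; ring
            _ ≤ δ * X * X^(346:ℕ) := by
                apply mul_le_mul_of_nonneg_left hXpow
                positivity
            _ = δ * (X * X^(346:ℕ)) := by ring
  -- assemble
  have hgoodimp : ∀ s : Fin m → Sam n, goodEv p tacc m s →
      ∀ B, |estimator m (2*tacc) s B - p B| ≤ ε * η := by
    intro s hE B
    have := estimator_correct p hp0 hn tacc htacc m s hE B
    have h3t : 3 * tacc ≤ ε * η := by
      rw [htaccdef]
      nlinarith
    linarith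
  have hpt : ∀ s : Fin m → Sam n,
      (if goodEv p tacc m s then ∏ i, sampleDist p (s i) else 0)
      ≤ (if ∀ B, |estimator m (2*tacc) s B - p B| ≤ ε * η then ∏ i, sampleDist p (s i) else 0) := by
    intro s
    by_cases hg : goodEv p tacc m s
    · rw [if_pos hg, if_pos (hgoodimp s hg)]
    · rw [if_neg hg]
      split_ifs with h
      · exact Finset.prod_nonneg (fun i _ => D_nonneg p hp0 (s i))
      · exact le_refl 0
  have hsplit : ∑ s : Fin m → Sam n, (if goodEv p tacc m s then ∏ i, sampleDist p (s i) else 0)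
      = 1 - ∑ s : Fin m → Sam n, (∏ i, sampleDist p (s i)) *
          (if goodEv p tacc m s then (0:ℝ) else 1) := by
    have e : ∀ s : Fin m → Sam n,
        (if goodEv p tacc m s then ∏ i, sampleDist p (s i) else 0)
        = (∏ i, sampleDist p (s i)) - (∏ i, sampleDist p (s i)) *
            (if goodEv p tacc m s then (0:ℝ) else 1) := by
      intro s
      split_ifs <;> ring
    rw [Finset.sum_congr rfl (fun s _ => e s), Finset.sum_sub_distrib, Wsum_one p hp1 m]
  calc (1:ℝ) - δ ≤ 1 - ∑ s : Fin m → Sam n, (∏ i, sampleDist p (s i)) *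
        (if goodEv p tacc m s then (0:ℝ) else 1) := by linarith
    _ = ∑ s : Fin m → Sam n, (if goodEv p tacc m s then ∏ i, sampleDist p (s i) else 0) :=
        hsplit.symm
    _ ≤ ∑ s : Fin m → Sam n,
        (if ∀ B, |estimator m (2*tacc) s B - p B| ≤ ε * η then ∏ i, sampleDist p (s i) else 0) :=
        Finset.sum_le_sum (fun s _ => hpt s)

end PopRec


/-- nonadaptive statistical content of Theorem 2: there is a
universal `K > 0` such that for every `n ≥ 1`, `0 < ε, δ < 1`, `η_est > 0`
and `m ≥ K log(n/(εδ))/(ε² η_est)` there is an estimator `f` such that for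
every distribution `p` whose error rate `η = 1 − p(0ⁿ)` satisfies
`η_est/5 ≤ η ≤ 5 η_est`, on `m` i.i.d. samples from `D_p` the output
satisfies `‖p̂ − p‖_∞ ≤ εη` with probability at least `1 − δ`. -/
theorem population_recovery_multiplicative :
    ∃ K : ℝ, 0 < K ∧
      ∀ n : ℕ, 1 ≤ n →
        ∀ ε δ : ℝ, 0 < ε → ε < 1 → 0 < δ → δ < 1 →
          ∀ ηest : ℝ, 0 < ηest →
            ∀ m : ℕ,
              (m : ℝ) ≥ K * Real.log (n / (ε * δ)) / (ε ^ 2 * ηest) →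
              ∃ f : (Fin m → (Fin n → Fin 3) × (Fin n → ZMod 2)) →
                  ((Fin n → Fin 4) → ℝ),
                ∀ p : (Fin n → Fin 4) → ℝ,
                  (∀ C, 0 ≤ p C) → (∑ C, p C = 1) →
                  ηest / 5 ≤ 1 - p (fun _ => 0) →
                  1 - p (fun _ => 0) ≤ 5 * ηest →
                  (∑ s : Fin m → (Fin n → Fin 3) × (Fin n → ZMod 2),
                      (if ∀ B, |f s B - p B| ≤ ε * (1 - p (fun _ => 0)) then
                        ∏ i, sampleDist p (s i) else 0)) ≥ 1 - δ := by
  refine ⟨10^8, by norm_num, ?_⟩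
  intro n hn ε δ hε0 hε1 hδ0 hδ1 ηest hηest m hm
  by_cases hε25 : 25/26 ≤ ε
  · exact PopRec.trivial_branch m ε δ ηest hε0 hε25 hε1 hδ0 hηest
  · exact PopRec.main_branch n hn m ε δ ηest hε0 (le_of_not_ge hε25) hδ0 hδ1 hηest hm
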